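/- Fix m ∈ ℕ and define the formal derivative D_m on ℂ^{ℓ̃} by (D_m f)_α = ∑_{j : insertion of z_m at position j in α gives β} f_β (i.e., (D_m f)_α = ∑_{0≤j≤|α|} f_{r_j(α)} where r_j inserts the letter z_m after position j). Then for q ≥ p + 3 and f with ‖f‖_p < ∞, one has ‖D_m f‖_q² ≤ (2m)^p ‖f‖_p², so D_m maps L²(ℓ̃, μ_{-p}) boundedly into L²(ℓ̃, μ_{-q}). -/

import Mathlib

/-- Weight `(2ℕ)^α = ∏_k (2 i_k)` of a word (letter `i` represents `z_{i+1}`). -/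
noncomputable def ncWeight (α : FreeMonoid ℕ) : ℝ :=
  (FreeMonoid.toList α |>.map (fun i => (2 * (i + 1) : ℝ))).prod

/-- `r_j(α)`: insertion of the letter `z_m` after position `j` of the word `α`. -/
def insertLetter (m : ℕ) (α : FreeMonoid ℕ) (j : ℕ) : FreeMonoid ℕ :=
  FreeMonoid.ofList ((FreeMonoid.toList α).take j ++ m :: (FreeMonoid.toList α).drop j)

/-- The formal derivative `D_m`: `(D_m f)_α = ∑_{0 ≤ j ≤ |α|} f_{r_j(α)}`. -/
noncomputable def Dm (m : ℕ) (f : FreeMonoid ℕ → ℂ) (α : FreeMonoid ℕ) : ℂ :=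
  ∑ j ∈ Finset.range ((FreeMonoid.toList α).length + 1), f (insertLetter m α j)

/-! Cauchy–Schwarz gives `|(D_m f)_α|² ≤ (|α|+1) ∑_j |f_{r_j(α)}|²`, and `(2ℕ)^{r_j(α)} = 2(m+1)·(2ℕ)^α`
turns `(2ℕ)^{-αq}` into `(2(m+1))^p (2ℕ)^{-r_j(α) p}` times the surplus `(2ℕ)^{-α(q-p)}`. Since
`|α| + 1 ≤ (2ℕ)^α`, two surplus powers absorb both the Cauchy–Schwarz factor `|α| + 1` and the
multiplicity `|β| = |α| + 1` with which each word `β` arises as some `r_j(α)`. -/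

open Finset FreeMonoid

lemma ncWeight_eq_prod (α : FreeMonoid ℕ) :
    ncWeight α = ((toList α).map fun i : ℕ => 2 * ((i : ℝ) + 1)).prod := by
  simp only [ncWeight, List.bind_eq_flatMap, List.pure_def, ← List.map_eq_flatMap, List.map_map]
  rfl

lemma length_add_one_le_ncWeight (α : FreeMonoid ℕ) :
    ((toList α).length + 1 : ℝ) ≤ ncWeight α := by
  rw [ncWeight_eq_prod]
  induction toList α with
  | nil => simp
  | cons a t ih =>
    simp only [List.map_cons, List.prod_cons, List.length_cons, Nat.cast_succ]
    have : (2 : ℝ) ≤ 2 * (a + 1) := by linarith [(a.cast_nonneg : (0 : ℝ) ≤ a)]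
    nlinarith

lemma one_le_ncWeight (α : FreeMonoid ℕ) : 1 ≤ ncWeight α := by
  linarith [length_add_one_le_ncWeight α, ((toList α).length.cast_nonneg : (0 : ℝ) ≤ _)]

lemma ncWeight_pos (α : FreeMonoid ℕ) : 0 < ncWeight α := one_pos.trans_le (one_le_ncWeight α)

section insertLetter

variable (m : ℕ) {α : FreeMonoid ℕ} {j : ℕ}

@[simp]
lemma toList_insertLetter :
    toList (insertLetter m α j) = (toList α).take j ++ m :: (toList α).drop j :=
  toList_ofList _

lemma length_insertLetter (hj : j ≤ (toList α).length) :
    (toList (insertLetter m α j)).length = (toList α).length + 1 := by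
  simp only [toList_insertLetter, List.length_append, List.length_take, List.length_cons,
    List.length_drop]
  omega

lemma eraseIdx_toList_insertLetter (hj : j ≤ (toList α).length) :
    (toList (insertLetter m α j)).eraseIdx j = toList α := by
  simp [List.eraseIdx_eq_take_drop_succ, List.drop_append, hj, List.drop_eq_nil_of_le]

lemma ncWeight_insertLetter : ncWeight (insertLetter m α j) = 2 * (m + 1) * ncWeight α := by
  simp only [ncWeight_eq_prod, toList_insertLetter, List.map_append, List.prod_append,
    List.map_cons, List.prod_cons]
  conv_rhs => rw [← List.take_append_drop j (toList α), List.map_append, List.prod_append]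
  ring

lemma sum_div_length_le_tsum (G : FreeMonoid ℕ → ℝ) (hG : 0 ≤ G) (hGs : Summable G)
    (S : Finset (FreeMonoid ℕ)) :
    ∑ α ∈ S, (∑ j ∈ range ((toList α).length + 1), G (insertLetter m α j)) /
      ((toList α).length + 1) ≤ ∑' β, G β := by
  classical
  set T := S.sigma fun α => range ((toList α).length + 1)
  set ψ : (Σ _ : FreeMonoid ℕ, ℕ) → FreeMonoid ℕ := fun x => insertLetter m x.1 x.2
  have hT : ∀ x ∈ T, x.2 ≤ (toList x.1).length := fun x hx =>
    Nat.lt_succ_iff.mp (mem_range.mp (mem_sigma.mp hx).2)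
  -- `α` is recovered from `r_j(α)` by deleting the letter at position `j`.
  have hfiber : ∀ β, #{x ∈ T | ψ x = β} ≤ (toList β).length := by
    intro β
    calc #{x ∈ T | ψ x = β} ≤ #(range (toList β).length) := by
          refine card_le_card_of_injOn Sigma.snd (fun x hx => ?_) (fun x hx y hy hxy => ?_)
          · obtain ⟨hxT, rfl⟩ := mem_filter.mp hx
            simp only [coe_range, Set.mem_Iio, ψ, length_insertLetter m (hT x hxT)]
            exact Nat.lt_succ_of_le (hT x hxT)
          · obtain ⟨hxT, hxβ⟩ := mem_filter.mp hx
            obtain ⟨hyT, hyβ⟩ := mem_filter.mp hy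
            have h := congrArg (fun γ => (toList γ).eraseIdx y.2) (hxβ.trans hyβ.symm)
            simp only [ψ, ← hxy] at h
            rw [eraseIdx_toList_insertLetter m (hT x hxT), hxy,
              eraseIdx_toList_insertLetter m (hT y hyT)] at h
            exact Sigma.ext (toList.injective h) (heq_of_eq hxy)
      _ = (toList β).length := card_range _
  calc ∑ α ∈ S, (∑ j ∈ range ((toList α).length + 1), G (insertLetter m α j)) /
        ((toList α).length + 1)
      = ∑ x ∈ T, G (ψ x) / (toList (ψ x)).length := by
        rw [sum_sigma]
        refine sum_congr rfl fun α _ => ?_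
        rw [sum_div]
        refine sum_congr rfl fun j hj => ?_
        rw [length_insertLetter m (Nat.lt_succ_iff.mp (mem_range.mp hj))]
        push_cast; rfl
    _ = ∑ β ∈ T.image ψ, #{x ∈ T | ψ x = β} • (G β / (toList β).length) :=
        sum_comp (fun β => G β / (toList β).length) ψ
    _ ≤ ∑ β ∈ T.image ψ, G β := by
        refine sum_le_sum fun β _ => ?_
        rw [nsmul_eq_mul]
        rcases eq_or_ne ((toList β).length : ℝ) 0 with h0 | h0
        · simpa [h0] using hG β
        · calc (#{x ∈ T | ψ x = β} : ℝ) * (G β / (toList β).length)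
              ≤ (toList β).length * (G β / (toList β).length) := by
                gcongr
                · exact div_nonneg (hG β) (Nat.cast_nonneg _)
                · exact_mod_cast hfiber β
            _ = G β := mul_div_cancel₀ _ h0
    _ ≤ ∑' β, G β := hGs.sum_le_tsum _ fun β _ => hG β

end insertLetter

lemma sq_mul_ncWeight_zpow_le (m : ℕ) {p q : ℕ} (hpq : p + 2 ≤ q) (α : FreeMonoid ℕ) (j : ℕ) :
    ((toList α).length + 1 : ℝ) ^ 2 * ncWeight α ^ (-(q : ℤ)) ≤
      (2 * (m + 1) : ℝ) ^ p * ncWeight (insertLetter m α j) ^ (-(p : ℤ)) := by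
  have hw := length_add_one_le_ncWeight α
  have hw1 := one_le_ncWeight α
  have hw0 : ncWeight α ≠ 0 := by positivity
  calc ((toList α).length + 1 : ℝ) ^ 2 * ncWeight α ^ (-(q : ℤ))
      ≤ ncWeight α ^ (2 : ℤ) * ncWeight α ^ (-(q : ℤ)) := by
        rw [zpow_ofNat]; gcongr
    _ = ncWeight α ^ (2 - q : ℤ) := by rw [← zpow_add₀ hw0]; ring_nf
    _ ≤ ncWeight α ^ (-(p : ℤ)) := zpow_le_zpow_right₀ hw1 (by omega)
    _ = (2 * (m + 1) : ℝ) ^ p * ncWeight (insertLetter m α j) ^ (-(p : ℤ)) := by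
        rw [ncWeight_insertLetter, mul_zpow, zpow_neg, zpow_neg, zpow_natCast, zpow_natCast]
        field_simp

lemma norm_Dm_sq_le (m : ℕ) (f : FreeMonoid ℕ → ℂ) (α : FreeMonoid ℕ) :
    ‖Dm m f α‖ ^ 2 ≤ ((toList α).length + 1 : ℝ) *
      ∑ j ∈ range ((toList α).length + 1), ‖f (insertLetter m α j)‖ ^ 2 := by
  calc ‖Dm m f α‖ ^ 2 ≤ (∑ j ∈ range ((toList α).length + 1), ‖f (insertLetter m α j)‖) ^ 2 :=
        pow_le_pow_left₀ (norm_nonneg _) (norm_sum_le _ _) 2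
    _ ≤ _ := by
        simpa using sq_sum_le_card_mul_sum_sq (s := range ((toList α).length + 1))
          (f := fun j => ‖f (insertLetter m α j)‖)

lemma norm_Dm_sq_mul_ncWeight_zpow_le (m : ℕ) {p q : ℕ} (hpq : p + 2 ≤ q) (f : FreeMonoid ℕ → ℂ)
    (α : FreeMonoid ℕ) :
    ‖Dm m f α‖ ^ 2 * ncWeight α ^ (-(q : ℤ)) ≤
      (∑ j ∈ range ((toList α).length + 1), (2 * (m + 1) : ℝ) ^ p *
        (‖f (insertLetter m α j)‖ ^ 2 * ncWeight (insertLetter m α j) ^ (-(p : ℤ)))) /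
        ((toList α).length + 1) := by
  set n : ℝ := (toList α).length + 1
  have hn : 0 < n := by positivity
  have hq : 0 ≤ ncWeight α ^ (-(q : ℤ)) := zpow_nonneg (ncWeight_pos α).le _
  rw [le_div_iff₀ hn]
  calc ‖Dm m f α‖ ^ 2 * ncWeight α ^ (-(q : ℤ)) * n
      ≤ n * (∑ j ∈ range ((toList α).length + 1), ‖f (insertLetter m α j)‖ ^ 2) *
          ncWeight α ^ (-(q : ℤ)) * n := by
        gcongr; exact norm_Dm_sq_le m f α
    _ = ∑ j ∈ range ((toList α).length + 1),
          ‖f (insertLetter m α j)‖ ^ 2 * (n ^ 2 * ncWeight α ^ (-(q : ℤ))) := by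
        rw [mul_sum, sum_mul, sum_mul]; exact sum_congr rfl fun j _ => by ring
    _ ≤ _ := by
        refine sum_le_sum fun j _ => ?_
        have := mul_le_mul_of_nonneg_left (sq_mul_ncWeight_zpow_le m hpq α j)
          (sq_nonneg ‖f (insertLetter m α j)‖)
        linarith

/-- For `q ≥ p + 3` and `f` with `‖f‖_p < ∞`, `‖D_m f‖_q² ≤ (2m)^p ‖f‖_p²`; hence `D_m`
maps `L²(ℓ̃, μ_{-p})` boundedly into `L²(ℓ̃, μ_{-q})`. (The letter `m : ℕ` represents
`z_{m+1}`, of weight `2(m+1)`.) -/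
theorem Dm_bounded (m : ℕ) (p q : ℕ) (hpq : p + 3 ≤ q) (f : FreeMonoid ℕ → ℂ)
    (hf : Summable (fun α => ‖f α‖ ^ 2 * ncWeight α ^ (-(p : ℤ)))) :
    Summable (fun α => ‖Dm m f α‖ ^ 2 * ncWeight α ^ (-(q : ℤ))) ∧
      (∑' α, ‖Dm m f α‖ ^ 2 * ncWeight α ^ (-(q : ℤ))) ≤
        (2 * (m + 1) : ℝ) ^ p * ∑' α, ‖f α‖ ^ 2 * ncWeight α ^ (-(p : ℤ)) := by
  set C : ℝ := (2 * (m + 1) : ℝ) ^ p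
  have hbound : ∀ S : Finset (FreeMonoid ℕ),
      ∑ α ∈ S, ‖Dm m f α‖ ^ 2 * ncWeight α ^ (-(q : ℤ)) ≤
        C * ∑' α, ‖f α‖ ^ 2 * ncWeight α ^ (-(p : ℤ)) := fun S =>
    calc ∑ α ∈ S, ‖Dm m f α‖ ^ 2 * ncWeight α ^ (-(q : ℤ))
        ≤ ∑ α ∈ S, (∑ j ∈ range ((toList α).length + 1), C *
            (‖f (insertLetter m α j)‖ ^ 2 * ncWeight (insertLetter m α j) ^ (-(p : ℤ)))) /
            ((toList α).length + 1) :=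
          sum_le_sum fun α _ => norm_Dm_sq_mul_ncWeight_zpow_le m (by omega) f α
      _ ≤ ∑' β, C * (‖f β‖ ^ 2 * ncWeight β ^ (-(p : ℤ))) :=
          sum_div_length_le_tsum m _
            (fun β => by have := ncWeight_pos β; positivity) (hf.mul_left C) S
      _ = C * ∑' β, ‖f β‖ ^ 2 * ncWeight β ^ (-(p : ℤ)) := tsum_mul_left
  have hnonneg : 0 ≤ fun α => ‖Dm m f α‖ ^ 2 * ncWeight α ^ (-(q : ℤ)) :=
    fun α => by have := ncWeight_pos α; positivity
  exact ⟨summable_of_sum_le hnonneg hbound, Real.tsum_le_of_sum_le hnonneg hbound⟩
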